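/- Let G be a dually chordal graph with compatible tree T, i.e., a spanning tree T of G such that each closed neighbourhood N_G[z] induces a subtree of T. Then for every vertex z and every r ≥ 1, the disk N_G^r[z] induces a subtree of T. -/

import Mathlib

open SimpleGraph

/-- `D` is a dominating set of `G`. -/
def IsDomSet {V : Type*} [DecidableEq V] (G : SimpleGraph V) (D : Finset V) : Prop :=
  ∀ v, v ∉ D → ∃ u ∈ D, G.Adj u v

/-- `D` is a total dominating set of `G`. -/
def IsTotDomSet {V : Type*} [DecidableEq V] (G : SimpleGraph V) (D : Finset V) : Prop :=
  ∀ v : V, ∃ u ∈ D, G.Adj u v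

/-- `u` and `v` are distinct and within distance at most 2 in `G`. -/
def WithinTwo {V : Type*} (G : SimpleGraph V) (u v : V) : Prop :=
  G.Adj u v ∨ ∃ w, G.Adj u w ∧ G.Adj w v

/-- `D` is a semitotal dominating set of `G`. -/
def IsSemiTDSet {V : Type*} [DecidableEq V] (G : SimpleGraph V) (D : Finset V) : Prop :=
  IsDomSet G D ∧ ∀ v ∈ D, ∃ u ∈ D, u ≠ v ∧ WithinTwo G u v

/-- The domination number of `G`. -/
noncomputable def gamma {V : Type*} [Fintype V] [DecidableEq V] (G : SimpleGraph V) : ℕ :=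
  sInf {n | ∃ D : Finset V, IsDomSet G D ∧ D.card = n}

/-- The total domination number of `G`. -/
noncomputable def gammaT {V : Type*} [Fintype V] [DecidableEq V] (G : SimpleGraph V) : ℕ :=
  sInf {n | ∃ D : Finset V, IsTotDomSet G D ∧ D.card = n}

/-- The semitotal domination number of `G`. -/
noncomputable def gammaT2 {V : Type*} [Fintype V] [DecidableEq V] (G : SimpleGraph V) : ℕ :=
  sInf {n | ∃ D : Finset V, IsSemiTDSet G D ∧ D.card = n}

/-!
Induction on `r`, starting from the single vertex `z` at `r = 0`: a vertex at distance `r + 1`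
from `z` has a neighbour `w` at distance `r`, and the closed neighbourhood `N_G[w]`, which
induces a subtree of `T`, lies in `N_G^{r+1}[z]` and meets `N_G^r[z]` in `w`.
-/

namespace SimpleGraph

variable {V : Type*} {G : SimpleGraph V}

lemma dist_le_dist_add_one_of_adj {z w v : V} (h : G.Adj w v) :
    G.dist z v ≤ G.dist z w + 1 := by
  simpa [dist_eq_one_iff_adj.mpr h] using h.reachable.dist_triangle_right z

lemma exists_adj_dist_add_one_eq {z v : V} (h : G.dist z v ≠ 0) :
    ∃ w, G.Adj w v ∧ G.dist z w + 1 = G.dist z v := by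
  obtain ⟨p, hp⟩ := exists_walk_of_dist_ne_zero h
  have hnil : ¬p.Nil := fun hn => h (by rw [← hp, hn.length_eq_zero])
  refine ⟨p.penultimate, p.adj_penultimate hnil, le_antisymm ?_ ?_⟩
  · have := dist_le p.dropLast
    have := p.length_dropLast_add_one hnil
    omega
  · exact dist_le_dist_add_one_of_adj (p.adj_penultimate hnil)

lemma Connected.setOf_dist_le_zero_eq (hconn : G.Connected) (z : V) :
    {v | G.dist z v ≤ 0} = {z} := by
  ext v
  simp [hconn.dist_eq_zero_iff, eq_comm]

theorem Connected.induce_setOf_dist_le_connected {T : SimpleGraph V} (hconn : G.Connected)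
    (hcompat : ∀ w, (T.induce {v | v = w ∨ G.Adj w v}).Connected) (z : V) :
    ∀ r : ℕ, (T.induce {v | G.dist z v ≤ r}).Connected
  | 0 => by
    rw [hconn.setOf_dist_le_zero_eq, induce_singleton_eq_top]
    exact connected_top
  | r + 1 => by
    have hball := hconn.induce_setOf_dist_le_connected hcompat z r
    have hz : z ∈ {u | G.dist z u ≤ r} := by simp
    refine T.induce_connected_of_patches z (by simp) fun {v} hv => ?_
    by_cases hvr : G.dist z v ≤ r
    · exact ⟨_, fun u hu => Nat.le_succ_of_le hu, hz, hvr, hball.preconnected _ _⟩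
    obtain ⟨w, hwv, hw⟩ := exists_adj_dist_add_one_eq (by omega : G.dist z v ≠ 0)
    have hwr : G.dist z w = r := by
      simp only [Set.mem_ofPred_eq] at hv
      omega
    have hpatch := induce_union_connected hball.preconnected (hcompat w).preconnected
      ⟨w, hwr.le, Or.inl rfl⟩
    refine ⟨_, Set.union_subset (fun u hu => Nat.le_succ_of_le hu) ?_, Or.inl hz,
      Or.inr (Or.inr hwv), hpatch.preconnected _ _⟩
    rintro u (rfl | hwu)
    · exact hwr.le.trans r.le_succ
    · exact hwr ▸ dist_le_dist_add_one_of_adj hwu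

end SimpleGraph

theorem disks_induce_subtrees_general {V : Type*}
    (G T : SimpleGraph V) (hconn : G.Connected)
    (hcompat : ∀ z : V, (SimpleGraph.induce {v : V | v = z ∨ G.Adj z v} T).Connected) :
    ∀ (z : V) (r : ℕ), 1 ≤ r →
      (SimpleGraph.induce {v : V | G.dist z v ≤ r} T).Connected :=
  fun z r _ => hconn.induce_setOf_dist_le_connected hcompat z r

theorem disks_induce_subtrees {V : Type*} [Fintype V] [DecidableEq V]
    (G T : SimpleGraph V) (hconn : G.Connected) (hle : T ≤ G) (htree : T.IsTree)
    (hcompat : ∀ z : V, (SimpleGraph.induce {v : V | v = z ∨ G.Adj z v} T).Connected) :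
    ∀ (z : V) (r : ℕ), 1 ≤ r →
      (SimpleGraph.induce {v : V | G.dist z v ≤ r} T).Connected :=
  disks_induce_subtrees_general G T hconn hcompat
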